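/- arXiv:2408.09091 — 7 statements merged into one kernel-verified Lean document; each statement's English description precedes it below -/
import Mathlib

section
/- Let Γ be a group acting on a set X. Suppose there exist elements σ, τ ∈ Γ, subsets U_σ, U_τ ⊆ X, and a point x ∈ X such that (1) x ∉ U_σ ∪ U_τ; (2) σ^k • ({x} ∪ U_τ) ⊆ U_σ for every integer k ≠ 0; (3) τ^k • ({x} ∪ U_σ) ⊆ U_τ for every integer k ≠ 0. Then σ and τ generate a non-abelian free subgroup of Γ of rank 2; precisely, the group homomorphism FreeGroup Bool → Γ sending the generator indexed by false to σ and the generator indexed by true to τ is injective. -/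
open Pointwise

section Aux

open Monoid Monoid.CoprodI

variable {Γ α : Type*} [Group Γ] [MulAction Γ α]
variable {ι : Type*} {H : ι → Type*} [∀ i, Group (H i)] (f : ∀ i, H i →* Γ)
variable (S : ι → Set α) (x : α)

lemma pingpong_word_smul_mem
    (hpp : Pairwise fun i j => ∀ h : H i, h ≠ 1 → f i h • ({x} ∪ S j) ⊆ S i)
    [Nontrivial ι] :
    ∀ {i j : ι} (w : NeWord H i j), CoprodI.lift f w.prod • x ∈ S i := by
  have hpp' : Pairwise fun i j => ∀ h : H i, h ≠ 1 → f i h • S j ⊆ S i := by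
    intro i j hij h hne
    exact (Set.smul_set_mono Set.subset_union_right).trans (hpp hij h hne)
  intro i j w
  induction w with
  | singleton h hne1 =>
      rename_i i
      obtain ⟨k, hk⟩ := exists_ne i
      have hmem : (f i) h • x ∈ S i :=
        hpp (Ne.symm hk) _ hne1 ⟨x, Or.inl rfl, rfl⟩
      simpa using hmem
  | append w₁ hne w₂ ih₁ ih₂ =>
      rename_i i j k l
      have h2 : CoprodI.lift f w₂.prod • x ∈ S k := ih₂
      have h1 : CoprodI.lift f w₁.prod • S k ⊆ S i :=
        lift_word_ping_pong f S hpp' w₁ hne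
      have : CoprodI.lift f (w₁.append hne w₂).prod • x
          = CoprodI.lift f w₁.prod • (CoprodI.lift f w₂.prod • x) := by
        simp [mul_smul]
      rw [this]
      exact h1 (Set.smul_mem_smul_set h2)

lemma pingpong_lift_injective
    (hx : ∀ i, x ∉ S i)
    (hpp : Pairwise fun i j => ∀ h : H i, h ≠ 1 → f i h • ({x} ∪ S j) ⊆ S i)
    [Nontrivial ι] :
    Function.Injective (CoprodI.lift f) := by
  classical
  apply (injective_iff_map_eq_one (CoprodI.lift f)).mpr
  rw [(CoprodI.Word.equiv).forall_congr_left]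
  intro w Heq
  dsimp [Word.equiv] at *
  by_contra hnotempty
  have hne : w ≠ Word.empty := fun h => hnotempty (by rw [h]; simp [Word.prod_empty])
  obtain ⟨i, j, w', rfl⟩ := NeWord.of_word w hne
  have := pingpong_word_smul_mem f S x hpp w'
  rw [show w'.prod = w'.toWord.prod from rfl, Heq] at this
  simp only [one_smul] at this
  exact hx i this

end Aux

/-- **Free subgroup criterion (ping-pong lemma).**
If a group `Γ` acts on a set `X` and there are elements `σ, τ ∈ Γ`, subsets
`Uσ, Uτ ⊆ X` and a point `x ∈ X` with `x ∉ Uσ ∪ Uτ`,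
`σ^k • ({x} ∪ Uτ) ⊆ Uσ` and `τ^k • ({x} ∪ Uσ) ⊆ Uτ` for all nonzero integers `k`,
then `σ` and `τ` generate a free subgroup of rank two: the homomorphism
`FreeGroup Bool →* Γ` sending `false ↦ σ` and `true ↦ τ` is injective. -/
theorem free_subgroup_criterion {Γ X : Type*} [Group Γ] [MulAction Γ X]
    (σ τ : Γ) (Uσ Uτ : Set X) (x : X)
    (h1 : x ∉ Uσ ∪ Uτ)
    (h2 : ∀ k : ℤ, k ≠ 0 → σ ^ k • ({x} ∪ Uτ : Set X) ⊆ Uσ)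
    (h3 : ∀ k : ℤ, k ≠ 0 → τ ^ k • ({x} ∪ Uσ : Set X) ⊆ Uτ) :
    Function.Injective (FreeGroup.lift (fun b : Bool => if b then τ else σ)) := by
  classical
  set a : Bool → Γ := fun b => if b then τ else σ with ha
  have key : FreeGroup.lift a =
      (Monoid.CoprodI.lift fun i : Bool => FreeGroup.lift fun _ : Unit => a i).comp
        (@freeGroupEquivCoprodI Bool).toMonoidHom := by
    ext i
    simp
  rw [key, MonoidHom.coe_comp]
  refine Function.Injective.comp ?_ (MulEquiv.injective freeGroupEquivCoprodI)
  let H : Bool → Type _ := fun _ => FreeGroup Unit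
  let f : ∀ i : Bool, H i →* Γ := fun i => FreeGroup.lift fun _ => a i
  let S : Bool → Set X := fun b => if b then Uτ else Uσ
  apply pingpong_lift_injective f S x
  · intro i
    cases i
    · exact fun h => h1 (Or.inl h)
    · exact fun h => h1 (Or.inr h)
  · intro i j hij
    refine FreeGroup.freeGroupUnitEquivInt.forall_congr_left.mpr ?_
    intro n hne1
    change FreeGroup.lift (fun _ => a i) (FreeGroup.of () ^ n) • ({x} ∪ S j) ⊆ S i
    simp only [map_zpow, FreeGroup.lift_apply_of]
    have hnne0 : n ≠ 0 := by
      rintro rfl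
      apply hne1
      simp [FreeGroup.freeGroupUnitEquivInt]
    have hji : j = !i := by
      cases i <;> cases j <;> simp_all
    subst hji
    cases i
    · simpa [a, S] using h2 n hnne0
    · simpa [a, S] using h3 n hnne0
end

section
/- Let Γ be a group acting on a set X with a finite generating set S = {γ_1, …, γ_n} (so Subgroup.closure S = ⊤). Suppose there exist elements σ, τ ∈ Γ, subsets U_σ, U_τ ⊆ X, and a point x ∈ X such that (1) x ∉ (U_σ ∪ U_τ) ∪ ⋃_{ε=±1} ⋃_{i=1}^n γ_i^ε • (U_σ ∪ U_τ); (2) σ^k • ({x} ∪ U_τ ∪ ⋃_{ε=±1} ⋃_{i=1}^n γ_i^ε • U_τ) ⊆ U_σ for every integer k ≠ 0; (3) τ^k • ({x} ∪ U_σ ∪ ⋃_{ε=±1} ⋃_{i=1}^n γ_i^ε • U_σ) ⊆ U_τ for every integer k ≠ 0. Then Γ is not cyclic and Γ has infinite girth. -/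
/-!
To exclude relations of length at most `N`, replace the generators `γ i` by
`a i = σ ^ m i * γ i * τ ^ m i` together with `σ` and `τ`, where the `m i` are distinct
nonzero multiples of some `M > N`. A reduced word of length at most `N` in these generators
expands to an alternating product of powers of `σ` and `τ`, with a single `γ i ^ (±1)` between
a `σ`-power and a `τ`-power at some junctions. None of these powers is trivial, because a merged
exponent is `± m i`, or `± (m i - m j)` with `i ≠ j`, or congruent to `± d` modulo `M` with
`0 < d ≤ N`. Ping-pong then moves `x` into `Uσ ∪ Uτ`, so the word is nontrivial in `Γ`.
The commutator of `σ` and `τ` is such a word, so `Γ` is not commutative, let alone cyclic.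
-/

open Pointwise

/-- A finitely generated group `Γ` has infinite girth if for every `n` there is a
finite generating set `S` of `Γ` such that the Cayley graph of `(Γ, S)` has no
nontrivial relation of length at most `n`: every element `w` of the free group on `S`
of reduced word length at most `n` which evaluates to the identity in `Γ` is trivial. -/
def HasInfiniteGirth (Γ : Type*) [Group Γ] : Prop :=
  ∀ n : ℕ, ∃ S : Finset Γ, Subgroup.closure (S : Set Γ) = ⊤ ∧
    ∀ w : FreeGroup S,
      (@FreeGroup.norm S (Classical.decEq S) w) ≤ n →
      FreeGroup.lift (fun s : S => (s : Γ)) w = 1 → w = 1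

namespace FreeGroup

variable {α β G : Type*} [Group G]

theorem lift_map (f : β → G) (g : α → β) (w : FreeGroup α) :
    lift f (map g w) = lift (f ∘ g) w := by
  show ((lift f).comp (map g)) w = _
  congr 1
  ext a
  simp

theorem norm_map_le [DecidableEq α] [DecidableEq β] (g : α → β) (w : FreeGroup α) :
    norm (map g w) ≤ norm w :=
  calc norm (map g w) = norm (mk (w.toWord.map fun x => (g x.1, x.2))) := by
        rw [← map.mk, mk_toWord]
    _ ≤ _ := norm_mk_le
    _ = norm w := List.length_map _

end FreeGroup

theorem hasInfiniteGirth_of_forall_exists {Γ α : Type*} [Group Γ] [Fintype α] [DecidableEq α]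
    (h : ∀ N : ℕ, ∃ f : α → Γ, Subgroup.closure (Set.range f) = ⊤ ∧
      ∀ w : FreeGroup α, w ≠ 1 → w.norm ≤ N → FreeGroup.lift f w ≠ 1) :
    HasInfiniteGirth Γ := by
  classical
  intro N
  obtain ⟨f, hgen, hrel⟩ := h N
  refine ⟨Finset.univ.image f, by simpa using hgen, fun w hw hlift => ?_⟩
  choose e he using fun s : (Finset.univ.image f : Finset Γ) => Finset.mem_image.1 s.2
  have hfe : f ∘ e = Subtype.val := funext fun s => (he s).2
  have he_inj : Function.Injective e := .of_comp (f := f) (hfe ▸ Subtype.val_injective)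
  by_contra hw1
  refine hrel (FreeGroup.map e w) ?_ ?_ ?_
  · rwa [← map_one (FreeGroup.map e), (FreeGroup.map_injective he_inj).ne_iff]
  · exact (@FreeGroup.norm_map_le _ _ (Classical.decEq _) _ e w).trans hw
  · rwa [FreeGroup.lift_map, hfe]

namespace InfiniteGirthCriterion

def zsign (b : Bool) : ℤ := if b then 1 else -1

@[simp] lemma zsign_true : zsign true = 1 := rfl

@[simp] lemma zsign_false : zsign false = -1 := rfl

lemma zsign_not (b : Bool) : zsign (!b) = -zsign b := by cases b <;> rfl

lemma zsign_ne_zero (b : Bool) : zsign b ≠ 0 := by cases b <;> simp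

lemma cond_inv_eq_zpow_zsign {G : Type*} [Group G] (b : Bool) (g : G) :
    cond b g g⁻¹ = g ^ zsign b := by
  cases b <;> simp

lemma ne_of_dvd_sub_zsign_mul {M d : ℕ} {k c : ℤ} (s : Bool) (hk : (M : ℤ) ∣ k - zsign s * d)
    (hc : (M : ℤ) ∣ c) (hd : 0 < d) (hdM : d < M) : k ≠ c := by
  rintro rfl
  have hMd : (M : ℤ) ∣ zsign s * d := by simpa using dvd_sub hc hk
  have hMd' : M ∣ d := by
    rw [← Int.natCast_dvd_natCast]
    cases s <;> simpa using hMd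
  exact absurd (Nat.le_of_dvd hd hMd') (by omega)

section

variable {n : ℕ}

def spacing (M : ℕ) (i : Fin n) : ℤ := M * (i + 1)

lemma spacing_ne_zero {M : ℕ} (hM : 0 < M) (i : Fin n) : spacing M i ≠ 0 := by
  unfold spacing
  positivity

lemma dvd_spacing (M : ℕ) (i : Fin n) : (M : ℤ) ∣ spacing M i := dvd_mul_right _ _

lemma spacing_injective {M : ℕ} (hM : 0 < M) : Function.Injective (spacing (n := n) M) := by
  intro i j h
  have := mul_left_cancel₀ (by positivity) h
  exact Fin.ext (by omega)

abbrev Letter (n : ℕ) := (Fin n ⊕ Bool) × Bool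

variable {Γ X : Type*} [Group Γ] [MulAction Γ X]
  (ρ : Bool → Γ) (γ : Fin n → Γ) (m : Fin n → ℤ) (U : Bool → Set X) (x : X) (M : ℕ)

/-- With `ρ true = σ` and `ρ false = τ`, `gens (.inl i)` is the generator `a i`. -/
def gens : Fin n ⊕ Bool → Γ
  | .inl i => ρ true ^ m i * γ i * ρ false ^ m i
  | .inr b => ρ b

def act (q : Letter n) : Γ := gens ρ γ m q.1 ^ zsign q.2

lemma gens_inl_zpow_zsign (i : Fin n) (ε : Bool) :
    gens ρ γ m (.inl i) ^ zsign ε =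
      ρ ε ^ (zsign ε * m i) * γ i ^ zsign ε * ρ (!ε) ^ (zsign ε * m i) := by
  cases ε <;> simp [gens, mul_assoc]

lemma closure_range_gens (hγ : Subgroup.closure (Set.range γ) = ⊤) :
    Subgroup.closure (Set.range (gens ρ γ m)) = ⊤ := by
  rw [eq_top_iff, ← hγ, Subgroup.closure_le]
  rintro _ ⟨i, rfl⟩
  have hmem (a) : gens ρ γ m a ∈ Subgroup.closure (Set.range (gens ρ γ m)) :=
    Subgroup.subset_closure ⟨a, rfl⟩
  have hγi : γ i = (ρ true ^ m i)⁻¹ * gens ρ γ m (.inl i) * (ρ false ^ m i)⁻¹ := by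
    simp [gens, mul_assoc]
  rw [SetLike.mem_coe, hγi]
  exact mul_mem (mul_mem (inv_mem (zpow_mem (hmem (.inr true)) _)) (hmem _))
    (inv_mem (zpow_mem (hmem (.inr false)) _))

def zone (b : Bool) : Set X :=
  {x} ∪ U (!b) ∪ ⋃ i, (γ i • U (!b) ∪ (γ i)⁻¹ • U (!b))

lemma mem_zone_self (b : Bool) : x ∈ zone γ U x b := Or.inl (Or.inl rfl)

lemma subset_zone_not (b : Bool) : U b ⊆ zone γ U x (!b) := fun _ hy =>
  Or.inl (Or.inr (by rwa [Bool.not_not]))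

lemma zpow_smul_mem_zone {b : Bool} {y : X} (hy : y ∈ U (!b)) (i : Fin n) (ε : Bool) :
    γ i ^ zsign ε • y ∈ zone γ U x b := by
  refine Or.inr (Set.mem_iUnion.2 ⟨i, ?_⟩)
  cases ε
  · rw [zsign_false, zpow_neg_one]
    exact Or.inr (Set.smul_mem_smul_set hy)
  · rw [zsign_true, zpow_one]
    exact Or.inl (Set.smul_mem_smul_set hy)

/-- The side (`true` for `σ`, `false` for `τ`) of the leftmost power in the expansion of a
letter. -/
def player : Letter n → Bool
  | (.inl _, ε) => ε
  | (.inr b, _) => b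

/-- The exponent `k` of the leftmost power in the expansion of a reduced word of length `L`
with first letter `p`: after `a i ^ ε` it is `zsign ε * m i`; after a run of `d ≤ L` letters
`ρ b ^ s` it is `zsign s * d` plus `0` or some `± m i`, which is only recorded modulo `M`. -/
def Carry : Letter n → ℤ → ℕ → Prop
  | (.inl i, ε), k, _ => k = zsign ε * m i
  | (.inr _, s), k, L => ∃ d : ℕ, 0 < d ∧ d ≤ L ∧ (M : ℤ) ∣ k - zsign s * d

def State (p : Letter n) (L : ℕ) (y : X) : Prop :=
  ∃ k, Carry m M p k L ∧ ∃ z ∈ zone γ U x (player p), y = ρ (player p) ^ k • z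

variable {ρ γ m U x M}

lemma Carry.ne_zero (hm0 : ∀ i, m i ≠ 0) {p : Letter n} {k : ℤ} {L : ℕ}
    (h : Carry m M p k L) (hL : L < M) : k ≠ 0 := by
  obtain ⟨i | b, s⟩ := p
  · exact h ▸ mul_ne_zero (zsign_ne_zero s) (hm0 i)
  · obtain ⟨d, hd, hdL, hdvd⟩ := h
    exact ne_of_dvd_sub_zsign_mul s hdvd (dvd_zero _) hd (by omega)

lemma Carry.ne_zsign_mul (hmM : ∀ i, (M : ℤ) ∣ m i) (hminj : Function.Injective m)
    {p : Letter n} {k : ℤ} {L : ℕ} (h : Carry m M p k L) (hL : L < M) {j : Fin n}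
    (hj : .inl j = p.1 → (!player p) = p.2) : k ≠ zsign (player p) * m j := by
  obtain ⟨i | b, s⟩ := p
  · have hij : i ≠ j := by
      rintro rfl
      simpa [player] using hj rfl
    rw [show k = _ from h]
    exact fun hk => hij (hminj (mul_left_cancel₀ (zsign_ne_zero s) hk))
  · obtain ⟨d, hd, hdL, hdvd⟩ := h
    exact ne_of_dvd_sub_zsign_mul s hdvd (dvd_mul_of_dvd_right (hmM j) _) hd (by omega)

lemma state_inl_smul {L : ℕ} {y : X} (j : Fin n) (ε : Bool)
    (hy : ρ (!ε) ^ (zsign ε * m j) • y ∈ U (!ε)) :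
    State ρ γ m U x M (.inl j, ε) L (act ρ γ m (.inl j, ε) • y) :=
  ⟨zsign ε * m j, rfl, γ j ^ zsign ε • ρ (!ε) ^ (zsign ε * m j) • y,
    zpow_smul_mem_zone γ U x hy j ε, by simp [act, gens_inl_zpow_zsign, mul_smul, player]⟩

variable (hping : ∀ (b : Bool) (k : ℤ), k ≠ 0 → ρ b ^ k • zone γ U x b ⊆ U b)
  (hm0 : ∀ i, m i ≠ 0) (hmM : ∀ i, (M : ℤ) ∣ m i) (hminj : Function.Injective m)
include hping hm0

lemma State.mem {p : Letter n} {L : ℕ} {y : X} (h : State ρ γ m U x M p L y) (hL : L < M) :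
    y ∈ U (player p) := by
  obtain ⟨k, hk, z, hz, rfl⟩ := h
  exact hping _ k (hk.ne_zero hm0 hL) (Set.smul_mem_smul_set hz)

lemma state_singleton (q : Letter n) : State ρ γ m U x M q 1 (act ρ γ m q • x) := by
  obtain ⟨j | b, ε⟩ := q
  · exact state_inl_smul j ε (hping _ _ (mul_ne_zero (zsign_ne_zero ε) (hm0 j))
      (Set.smul_mem_smul_set (mem_zone_self γ U x _)))
  · exact ⟨zsign ε, ⟨1, one_pos, le_rfl, by simp⟩, x, mem_zone_self γ U x _, rfl⟩

include hmM

lemma State.smul_inr {p : Letter n} {L : ℕ} {y : X} (h : State ρ γ m U x M p L y)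
    (hL : L + 1 < M) {b ε : Bool} (hp : .inr b = p.1 → ε = p.2) :
    State ρ γ m U x M (.inr b, ε) (L + 1) (act ρ γ m (.inr b, ε) • y) := by
  rcases Bool.eq_or_eq_not b (player p) with rfl | rfl
  · obtain ⟨k, hk, z, hz, rfl⟩ := h
    refine ⟨zsign ε + k, ?_, z, hz, by simp [act, gens, player, mul_smul, zpow_add]⟩
    obtain ⟨i | b, s⟩ := p
    · refine ⟨1, one_pos, by omega, ?_⟩
      rw [show k = _ from hk]
      simpa using dvd_mul_of_dvd_right (hmM i) _
    · obtain ⟨d, hd, hdL, hdvd⟩ := hk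
      obtain rfl : ε = s := hp rfl
      refine ⟨d + 1, d.succ_pos, by omega, ?_⟩
      convert hdvd using 1
      push_cast
      ring
  · exact ⟨zsign ε, ⟨1, one_pos, by omega, by simp⟩, y,
      subset_zone_not γ U x _ (h.mem hping hm0 (by omega)), rfl⟩

include hminj

lemma State.smul_inl {p : Letter n} {L : ℕ} {y : X} (h : State ρ γ m U x M p L y)
    (hL : L + 1 < M) {j : Fin n} {ε : Bool} (hp : .inl j = p.1 → ε = p.2) :
    State ρ γ m U x M (.inl j, ε) (L + 1) (act ρ γ m (.inl j, ε) • y) := by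
  apply state_inl_smul
  rcases Bool.eq_or_eq_not ε (player p) with rfl | rfl
  · exact hping _ _ (mul_ne_zero (zsign_ne_zero _) (hm0 j))
      (Set.smul_mem_smul_set (subset_zone_not γ U x _ (h.mem hping hm0 (by omega))))
  · obtain ⟨k, hk, z, hz, rfl⟩ := h
    -- `ρ b ^ (-(zsign b * m j))` merges with the leftmost power `ρ b ^ k` of the word
    have hkj := hk.ne_zsign_mul hmM hminj (by omega) hp
    rw [Bool.not_not, ← mul_smul, ← zpow_add]
    refine hping _ _ ?_ (Set.smul_mem_smul_set hz)
    rw [zsign_not]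
    intro h0
    exact hkj (by linarith)

lemma State.smul {p q : Letter n} {L : ℕ} {y : X} (h : State ρ γ m U x M p L y)
    (hL : L + 1 < M) (hqp : q.1 = p.1 → q.2 = p.2) :
    State ρ γ m U x M q (L + 1) (act ρ γ m q • y) := by
  obtain ⟨j | b, ε⟩ := q
  exacts [h.smul_inl hping hm0 hmM hminj hL hqp, h.smul_inr hping hm0 hmM hL hqp]

lemma state_prod : ∀ (p : Letter n) (v : List (Letter n)), FreeGroup.IsReduced (p :: v) →
    (p :: v).length < M →
      State ρ γ m U x M p (p :: v).length (((p :: v).map (act ρ γ m)).prod • x)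
  | p, [], _, _ => by simpa using state_singleton hping hm0 p
  | p, q :: v, hred, hlen => by
    rw [FreeGroup.isReduced_cons_cons] at hred
    rw [List.map_cons, List.prod_cons, mul_smul]
    exact (state_prod q v hred.2 (by simp at hlen ⊢; omega)).smul hping hm0 hmM hminj
      (by simpa using hlen) hred.1

variable (hx : ∀ b, x ∉ U b)
include hx

lemma prod_map_act_ne_one {v : List (Letter n)} (hred : FreeGroup.IsReduced v) (hne : v ≠ [])
    (hlen : v.length < M) : (v.map (act ρ γ m)).prod ≠ 1 := by
  obtain ⟨p, v, rfl⟩ := List.exists_cons_of_ne_nil hne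
  intro h1
  have hmem := (state_prod hping hm0 hmM hminj p v hred hlen).mem hping hm0 hlen
  rw [h1, one_smul] at hmem
  exact hx _ hmem

lemma lift_gens_ne_one {w : FreeGroup (Fin n ⊕ Bool)} (hw : w ≠ 1) (hlen : w.norm < M) :
    FreeGroup.lift (gens ρ γ m) w ≠ 1 := by
  rw [← FreeGroup.mk_toWord (x := w), FreeGroup.lift_mk]
  simp_rw [cond_inv_eq_zpow_zsign]
  exact prod_map_act_ne_one hping hm0 hmM hminj hx FreeGroup.isReduced_toWord
    (by rwa [ne_eq, FreeGroup.toWord_eq_nil_iff]) hlen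

end

end InfiniteGirthCriterion

open InfiniteGirthCriterion in
/-- **Nakamura's criterion for infinite girth.** -/
theorem infinite_girth_criterion {Γ X : Type*} [Group Γ] [MulAction Γ X]
    {n : ℕ} (γ : Fin n → Γ) (hgen : Subgroup.closure (Set.range γ) = ⊤)
    (σ τ : Γ) (Uσ Uτ : Set X) (x : X)
    (h1 : x ∉ (Uσ ∪ Uτ) ∪ ⋃ i : Fin n, (γ i • (Uσ ∪ Uτ) ∪ (γ i)⁻¹ • (Uσ ∪ Uτ)))
    (h2 : ∀ k : ℤ, k ≠ 0 →
      σ ^ k • ({x} ∪ Uτ ∪ ⋃ i : Fin n, (γ i • Uτ ∪ (γ i)⁻¹ • Uτ) : Set X) ⊆ Uσ)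
    (h3 : ∀ k : ℤ, k ≠ 0 →
      τ ^ k • ({x} ∪ Uσ ∪ ⋃ i : Fin n, (γ i • Uσ ∪ (γ i)⁻¹ • Uσ) : Set X) ⊆ Uτ) :
    ¬ IsCyclic Γ ∧ HasInfiniteGirth Γ := by
  let ρ : Bool → Γ := fun b => cond b σ τ
  let U : Bool → Set X := fun b => cond b Uσ Uτ
  have hping : ∀ (b : Bool) (k : ℤ), k ≠ 0 → ρ b ^ k • zone γ U x b ⊆ U b := by
    rintro (_ | _) k hk
    exacts [h3 k hk, h2 k hk]
  have hx : ∀ b, x ∉ U b := by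
    rintro (_ | _) hxU
    exacts [h1 (.inl (.inr hxU)), h1 (.inl (.inl hxU))]
  refine ⟨fun hcyc => ?_, hasInfiniteGirth_of_forall_exists fun N =>
    ⟨gens ρ γ (spacing (N + 1)), closure_range_gens ρ γ _ hgen, fun w hw hN =>
      lift_gens_ne_one hping (spacing_ne_zero N.succ_pos) (dvd_spacing _)
        (spacing_injective N.succ_pos) hx hw (by omega)⟩⟩
  have hcomm : σ * τ = τ * σ := IsCyclic.commGroup.mul_comm σ τ
  refine prod_map_act_ne_one hping (spacing_ne_zero (M := 5) (by norm_num)) (dvd_spacing _)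
    (spacing_injective (by norm_num)) hx
    (v := [(.inr true, true), (.inr false, true), (.inr true, false), (.inr false, false)])
    (by simp) (by simp) (by simp) ?_
  simp [act, gens, ρ, ← mul_assoc, hcomm]
end

section
/- Let Γ be a group acting on a set X with a finite generating set S = {γ_1, …, γ_n} (so Subgroup.closure S = ⊤), and suppose there exist σ, τ ∈ Γ, subsets U_σ, U_τ ⊆ X, and a point x ∈ X satisfying: (1) x ∉ (U_σ ∪ U_τ) ∪ ⋃_{ε=±1} ⋃_{i=1}^n γ_i^ε • (U_σ ∪ U_τ); (2) σ^k • ({x} ∪ U_τ ∪ ⋃_{ε=±1} ⋃_{i=1}^n γ_i^ε • U_τ) ⊆ U_σ for every integer k ≠ 0; (3) τ^k • ({x} ∪ U_σ ∪ ⋃_{ε=±1} ⋃_{i=1}^n γ_i^ε • U_σ) ⊆ U_τ for every integer k ≠ 0. Then the group homomorphism FreeGroup Bool → Γ sending the generator indexed by false to σ and the generator indexed by true to τ is injective; in particular the subgroup generated by σ and τ is a non-abelian free subgroup of Γ. -/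
open Pointwise

private lemma freeGroupUnit_eq_zpow (h : FreeGroup Unit) (hne : h ≠ 1) :
    ∃ k : ℤ, k ≠ 0 ∧ ∀ {G : Type*} [Group G] (g : G),
      FreeGroup.lift (fun _ => g) h = g ^ k := by
  have hh : FreeGroup.of () ^ (FreeGroup.freeGroupUnitEquivInt h : ℤ) = h :=
    FreeGroup.freeGroupUnitEquivInt.symm_apply_apply h
  refine ⟨FreeGroup.freeGroupUnitEquivInt h, ?_, ?_⟩
  · intro hk
    apply hne
    rw [hk] at hh
    simpa using hh.symm
  · intro G _ g
    conv_lhs => rw [← hh]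
    rw [map_zpow, FreeGroup.lift_apply_of]

/-- Under Nakamura's ping-pong hypotheses (relative to a finite generating set
`γ 1, …, γ n` of `Γ`), the elements `σ` and `τ` generate a non-abelian free
subgroup of rank two: the homomorphism `FreeGroup Bool →* Γ` sending
`false ↦ σ` and `true ↦ τ` is injective. -/
theorem free_subgroup_from_girth_criterion {Γ X : Type*} [Group Γ] [MulAction Γ X]
    {n : ℕ} (γ : Fin n → Γ) (hgen : Subgroup.closure (Set.range γ) = ⊤)
    (σ τ : Γ) (Uσ Uτ : Set X) (x : X)
    (h1 : x ∉ (Uσ ∪ Uτ) ∪ ⋃ i : Fin n, (γ i • (Uσ ∪ Uτ) ∪ (γ i)⁻¹ • (Uσ ∪ Uτ)))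
    (h2 : ∀ k : ℤ, k ≠ 0 →
      σ ^ k • ({x} ∪ Uτ ∪ ⋃ i : Fin n, (γ i • Uτ ∪ (γ i)⁻¹ • Uτ) : Set X) ⊆ Uσ)
    (h3 : ∀ k : ℤ, k ≠ 0 →
      τ ^ k • ({x} ∪ Uσ ∪ ⋃ i : Fin n, (γ i • Uσ ∪ (γ i)⁻¹ • Uσ) : Set X) ⊆ Uτ) :
    Function.Injective (FreeGroup.lift (fun b : Bool => if b then τ else σ)) := by
  classical
  -- Basic consequences of the hypotheses
  have hx : x ∉ Uσ ∪ Uτ := fun h => h1 (Or.inl h)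
  have hσx : ∀ k : ℤ, k ≠ 0 → σ ^ k • x ∈ Uσ := by
    intro k hk
    exact h2 k hk ⟨x, Or.inl (Or.inl rfl), rfl⟩
  have hτx : ∀ k : ℤ, k ≠ 0 → τ ^ k • x ∈ Uτ := by
    intro k hk
    exact h3 k hk ⟨x, Or.inl (Or.inl rfl), rfl⟩
  have hστ : ∀ k : ℤ, k ≠ 0 → σ ^ k • Uτ ⊆ Uσ := by
    intro k hk
    refine (Set.smul_set_mono ?_).trans (h2 k hk)
    intro y hy; exact Or.inl (Or.inr hy)
  have hτσ : ∀ k : ℤ, k ≠ 0 → τ ^ k • Uσ ⊆ Uτ := by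
    intro k hk
    refine (Set.smul_set_mono ?_).trans (h3 k hk)
    intro y hy; exact Or.inl (Or.inr hy)
  -- Set up the free product machinery
  set a : Bool → Γ := (fun b : Bool => if b then τ else σ) with ha
  have : FreeGroup.lift a =
      (Monoid.CoprodI.lift fun i : Bool => FreeGroup.lift fun _ : Unit => a i).comp
        (@freeGroupEquivCoprodI Bool).toMonoidHom := by
    ext i
    simp
  rw [this, MonoidHom.coe_comp]
  refine Function.Injective.comp ?_ (MulEquiv.injective freeGroupEquivCoprodI)
  let H : Bool → Type _ := fun _ => FreeGroup Unit
  let f : ∀ i : Bool, H i →* Γ := fun i => FreeGroup.lift fun _ => a i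
  let X' : Bool → Set X := fun b => if b then Uτ else Uσ
  have hX'sub : ∀ b, X' b ⊆ Uσ ∪ Uτ := by
    intro b; cases b
    · exact fun y hy => Or.inl hy
    · exact fun y hy => Or.inr hy
  -- The ping-pong hypothesis for sets
  have hpp : Pairwise fun i j => ∀ h : H i, h ≠ 1 → f i h • X' j ⊆ X' i := by
    intro i j hij h hne
    obtain ⟨k, hk, hfh⟩ := freeGroupUnit_eq_zpow h hne
    show FreeGroup.lift (fun _ => a i) h • X' j ⊆ X' i
    rw [hfh]
    rcases i with - | - <;> rcases j with - | -
    · exact absurd rfl hij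
    · simpa [X', a] using hστ k hk
    · simpa [X', a] using hτσ k hk
    · exact absurd rfl hij
  -- The ping-pong hypothesis for the point
  have hppx : ∀ i : Bool, ∀ h : H i, h ≠ 1 → f i h • x ∈ X' i := by
    intro i h hne
    obtain ⟨k, hk, hfh⟩ := freeGroupUnit_eq_zpow h hne
    show FreeGroup.lift (fun _ => a i) h • x ∈ X' i
    rw [hfh]
    cases i
    · simpa [X', a] using hσx k hk
    · simpa [X', a] using hτx k hk
  -- Key induction: every nonempty word moves x into one of the ping-pong sets
  have key : ∀ {i j : Bool} (w : Monoid.CoprodI.NeWord H i j),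
      Monoid.CoprodI.lift f w.prod • x ∈ X' i := by
    intro i j w
    induction w with
    | singleton h hne =>
      simpa using hppx _ h hne
    | append w₁ hne w₂ ih₁ ih₂ =>
      rw [Monoid.CoprodI.NeWord.append_prod, map_mul, mul_smul]
      have h2' : Monoid.CoprodI.lift f w₂.prod • x ∈ X' _ := ih₂
      have := Monoid.CoprodI.lift_word_ping_pong f X' hpp w₁ hne
      exact this ⟨_, h2', rfl⟩
  -- Nonempty words are nontrivial
  have hne1 : ∀ {i j : Bool} (w : Monoid.CoprodI.NeWord H i j),
      Monoid.CoprodI.lift f w.prod ≠ 1 := by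
    intro i j w heq
    have := key w
    rw [heq, one_smul] at this
    exact hx (hX'sub i this)
  -- Conclude injectivity
  apply (injective_iff_map_eq_one _).mpr
  rw [(Monoid.CoprodI.Word.equiv).forall_congr_left]
  intro w Heq
  dsimp [Monoid.CoprodI.Word.equiv] at *
  by_cases hw : w = Monoid.CoprodI.Word.empty
  · rw [hw, Monoid.CoprodI.Word.prod_empty]
  · obtain ⟨i, j, w', rfl⟩ := Monoid.CoprodI.NeWord.of_word w hw
    exact absurd Heq (hne1 w')
end

section
/- Let G be a subgroup of the group of bijective isometries of ℝ (the group ℝ ≃ᵢ ℝ under composition). Suppose there exists p ∈ ℝ such that the infimum of the set {dist(p, g p) : g ∈ G, g p ≠ p} is strictly positive (or this set is empty). Let H be the subset of G consisting of those g that act as translations, i.e. H = {g ∈ G | ∀ x ∈ ℝ, g x = x + g 0}. Then H is a subgroup of G of index at most 2, and there exists c ∈ ℝ such that for every g ∈ H there is an integer m with g x = x + m·c for all x ∈ ℝ; in particular H is cyclic. -/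
private def eps (f : ℝ ≃ᵢ ℝ) : ℝ := f 1 - f 0

private lemma abs_sub_apply (f : ℝ ≃ᵢ ℝ) (x y : ℝ) : |f x - f y| = |x - y| := by
  have := f.dist_eq x y
  simpa [Real.dist_eq] using this

private lemma eps_eq (f : ℝ ≃ᵢ ℝ) : eps f = 1 ∨ eps f = -1 := by
  have h := abs_sub_apply f 1 0
  simp only [sub_zero] at h
  rcases abs_eq_abs.mp h with h1 | h1
  · exact Or.inl h1
  · exact Or.inr h1

private lemma apply_eq (f : ℝ ≃ᵢ ℝ) (x : ℝ) : f x = f 0 + eps f * x := by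
  have h0 : f x - f 0 = x - 0 ∨ f x - f 0 = -(x - 0) := abs_eq_abs.mp (abs_sub_apply f x 0)
  have h1 : f x - f 1 = x - 1 ∨ f x - f 1 = -(x - 1) := abs_eq_abs.mp (abs_sub_apply f x 1)
  have he : f 1 = f 0 + eps f := by simp [eps]
  rcases eps_eq f with hε | hε <;> rw [hε] <;>
    rcases h0 with h0 | h0 <;> rcases h1 with h1 | h1 <;> rw [he, hε] at h1 <;> linarith

private lemma eps_mul (f g : ℝ ≃ᵢ ℝ) : eps (f * g) = eps f * eps g := by
  show f (g 1) - f (g 0) = eps f * eps g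
  rw [apply_eq f (g 1), apply_eq f (g 0)]
  simp only [eps]
  rw [apply_eq g 1, apply_eq g 0]
  simp only [eps]
  ring

private lemma eps_one : eps (1 : ℝ ≃ᵢ ℝ) = 1 := by simp [eps]

/-- Suppose a group `G` of isometries of `ℝ` admits a point `p` whose nontrivial
displacements `{dist p (g p) : g ∈ G, g p ≠ p}` are bounded below by a positive
constant (or there are none).  Then the set `H` of elements of `G` acting as
translations is a subgroup of index at most two in `G`, and there is `c ∈ ℝ` such that
every element of `H` is translation by an integer multiple of `c`; in particular `H`
is cyclic. -/
theorem translations_subgroup_cyclic (G : Subgroup (ℝ ≃ᵢ ℝ)) (p : ℝ)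
    (hdisc : {d : ℝ | ∃ g ∈ G, g p ≠ p ∧ d = dist p (g p)} = ∅ ∨
      0 < sInf {d : ℝ | ∃ g ∈ G, g p ≠ p ∧ d = dist p (g p)}) :
    ∃ H : Subgroup G, ((H : Set G) = {g : G | ∀ x : ℝ, (g : ℝ ≃ᵢ ℝ) x = x + (g : ℝ ≃ᵢ ℝ) 0})
      ∧ H.index ≠ 0 ∧ H.index ≤ 2
      ∧ (∃ c : ℝ, ∀ g ∈ H, ∃ m : ℤ, ∀ x : ℝ, (g : ℝ ≃ᵢ ℝ) x = x + m * c)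
      ∧ IsCyclic H := by
  classical
  -- the sign homomorphism
  let φ : G →* ℤˣ :=
    { toFun := fun g => if eps (g : ℝ ≃ᵢ ℝ) = 1 then 1 else -1
      map_one' := by simp [eps_one]
      map_mul' := by
        intro g h
        have := eps_mul (g : ℝ ≃ᵢ ℝ) (h : ℝ ≃ᵢ ℝ)
        rcases eps_eq (g : ℝ ≃ᵢ ℝ) with hg | hg <;>
          rcases eps_eq (h : ℝ ≃ᵢ ℝ) with hh | hh <;>
          simp_all }
  have hker : ∀ g : G, g ∈ φ.ker ↔ ∀ x : ℝ, (g : ℝ ≃ᵢ ℝ) x = x + (g : ℝ ≃ᵢ ℝ) 0 := by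
    intro g
    rw [MonoidHom.mem_ker]
    constructor
    · intro hg x
      have hε : eps (g : ℝ ≃ᵢ ℝ) = 1 := by
        by_contra h
        simp only [φ, MonoidHom.coe_mk, OneHom.coe_mk, if_neg h] at hg
        exact absurd hg (by decide)
      rw [apply_eq (g : ℝ ≃ᵢ ℝ) x, hε]; ring
    · intro hg
      have hε : eps (g : ℝ ≃ᵢ ℝ) = 1 := by
        rw [eps, hg 1, hg 0]; ring
      simp [φ, hε]
  refine ⟨φ.ker, ?_, ?_, ?_, ?_⟩
  · -- ker φ is the set of translations
    ext g
    simpa using hker g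
  · -- index ≠ 0
    rw [Subgroup.index_ker]
    exact Nat.card_pos.ne'
  · -- index ≤ 2
    rw [Subgroup.index_ker]
    calc Nat.card φ.range ≤ Nat.card ℤˣ := Subgroup.card_le_card_group _
      _ = 2 := by simp [Nat.card_eq_fintype_card]
  -- the positive gap
  obtain ⟨δ, hδpos, hδ⟩ : ∃ δ > 0, ∀ g : ℝ ≃ᵢ ℝ, g ∈ G → g p ≠ p → δ ≤ dist p (g p) := by
    rcases hdisc with h | h
    · refine ⟨1, one_pos, fun g hg hne => ?_⟩
      rw [Set.eq_empty_iff_forall_notMem] at h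
      exact absurd ⟨g, hg, hne, rfl⟩ (h _)
    · refine ⟨_, h, fun g hg hne => csInf_le ⟨0, ?_⟩ ⟨g, hg, hne, rfl⟩⟩
      rintro d ⟨g', _, _, rfl⟩; exact dist_nonneg
  -- the subgroup of translation lengths
  let T : AddSubgroup ℝ :=
    { carrier := {t : ℝ | ∃ g : G, g ∈ φ.ker ∧ (g : ℝ ≃ᵢ ℝ) 0 = t}
      zero_mem' := ⟨1, one_mem _, rfl⟩
      add_mem' := by
        rintro a b ⟨g, hg, rfl⟩ ⟨h, hh, rfl⟩
        refine ⟨g * h, mul_mem hg hh, ?_⟩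
        show (g : ℝ ≃ᵢ ℝ) ((h : ℝ ≃ᵢ ℝ) 0) = _
        rw [(hker g).mp hg]; ring
      neg_mem' := by
        rintro a ⟨g, hg, rfl⟩
        refine ⟨g⁻¹, inv_mem hg, ?_⟩
        show (g : ℝ ≃ᵢ ℝ).symm 0 = -((g : ℝ ≃ᵢ ℝ) 0)
        rw [IsometryEquiv.symm_apply_eq, (hker g).mp hg]; ring }
  have hTval : ∀ t ∈ T, ∃ g : G, g ∈ φ.ker ∧ (g : ℝ ≃ᵢ ℝ) 0 = t := fun t ht => ht
  have hTdisc : ∀ t ∈ T, t ≠ 0 → δ ≤ |t| := by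
    rintro t ⟨g, hg, rfl⟩ hne
    have hgp : (g : ℝ ≃ᵢ ℝ) p = p + (g : ℝ ≃ᵢ ℝ) 0 := (hker g).mp hg p
    have hnp : (g : ℝ ≃ᵢ ℝ) p ≠ p := by
      rw [hgp]; intro h; exact hne (by linarith)
    have hle := hδ _ g.2 hnp
    rw [Real.dist_eq, hgp] at hle
    have h2 : p - (p + (g : ℝ ≃ᵢ ℝ) 0) = -((g : ℝ ≃ᵢ ℝ) 0) := by ring
    rwa [h2, abs_neg] at hle
  obtain ⟨c, hc⟩ : ∃ c : ℝ, T = AddSubgroup.zmultiples c := by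
    rcases T.dense_or_cyclic with hT | ⟨c, hc⟩
    · exfalso
      obtain ⟨t, htT, ht⟩ := hT.exists_mem_open isOpen_Ioo
        (⟨δ / 2, by constructor <;> linarith⟩ : (Set.Ioo (0:ℝ) δ).Nonempty)
      have := hTdisc t htT (ne_of_gt ht.1)
      rw [abs_of_pos ht.1] at this
      linarith [ht.2]
    · exact ⟨c, by rw [hc, AddSubgroup.zmultiples_eq_closure]⟩
  have hmem : ∀ g ∈ φ.ker, ∃ m : ℤ, ∀ x : ℝ, (g : ℝ ≃ᵢ ℝ) x = x + m * c := by
    intro g hg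
    have : (g : ℝ ≃ᵢ ℝ) 0 ∈ T := ⟨g, hg, rfl⟩
    rw [hc, AddSubgroup.mem_zmultiples_iff] at this
    obtain ⟨m, hm⟩ := this
    refine ⟨m, fun x => ?_⟩
    rw [(hker g).mp hg x, ← hm, zsmul_eq_mul]
  refine ⟨⟨c, hmem⟩, ?_⟩
  -- cyclicity
  by_cases hc0 : c = 0
  · have : Subsingleton φ.ker := by
      constructor
      rintro ⟨g, hg⟩ ⟨h, hh⟩
      obtain ⟨m, hm⟩ := hmem g hg
      obtain ⟨n, hn⟩ := hmem h hh
      refine Subtype.ext (Subtype.ext (IsometryEquiv.ext fun x => ?_))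
      rw [hm x, hn x, hc0]; ring
    exact isCyclic_of_subsingleton
  · have hval : ∀ g : φ.ker, ∃ m : ℤ, ((g : G) : ℝ ≃ᵢ ℝ) 0 = m * c := by
      intro g
      obtain ⟨m, hm⟩ := hmem g g.2
      exact ⟨m, by rw [hm 0]; ring⟩
    let ψ : φ.ker →* Multiplicative ℤ :=
      { toFun := fun g => Multiplicative.ofAdd (round ((((g : G) : ℝ ≃ᵢ ℝ)) 0 / c))
        map_one' := by simp
        map_mul' := by
          intro g h
          obtain ⟨m, hm⟩ := hval g
          obtain ⟨n, hn⟩ := hval h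
          have hgh : (((g * h : φ.ker) : G) : ℝ ≃ᵢ ℝ) 0
              = ((g : G) : ℝ ≃ᵢ ℝ) 0 + ((h : G) : ℝ ≃ᵢ ℝ) 0 := by
            show ((g : G) : ℝ ≃ᵢ ℝ) (((h : G) : ℝ ≃ᵢ ℝ) 0) = _
            rw [(hker g).mp g.2]; ring
          have e1 : (((g * h : φ.ker) : G) : ℝ ≃ᵢ ℝ) 0 / c = ((m + n : ℤ) : ℝ) := by
            rw [hgh, hm, hn]; push_cast; field_simp
          have e2 : ((g : G) : ℝ ≃ᵢ ℝ) 0 / c = (m : ℝ) := by rw [hm]; field_simp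
          have e3 : ((h : G) : ℝ ≃ᵢ ℝ) 0 / c = (n : ℝ) := by rw [hn]; field_simp
          simp only [e1, e2, e3, round_intCast]
          rfl }
    have hinj : Function.Injective ψ := by
      intro g h hgh
      obtain ⟨m, hm⟩ := hval g
      obtain ⟨n, hn⟩ := hval h
      simp only [ψ, MonoidHom.coe_mk, OneHom.coe_mk] at hgh
      rw [hm, hn] at hgh
      have em : (m : ℝ) * c / c = (m : ℝ) := by field_simp
      have en : (n : ℝ) * c / c = (n : ℝ) := by field_simp
      rw [em, en, round_intCast, round_intCast] at hgh
      have : m = n := by exact_mod_cast hgh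
      obtain ⟨m1, hm1⟩ := hmem g g.2
      obtain ⟨n1, hn1⟩ := hmem h h.2
      refine Subtype.ext (Subtype.ext (IsometryEquiv.ext fun x => ?_))
      rw [(hker _).mp g.2 x, (hker _).mp h.2 x, hm, hn, this]
    exact isCyclic_of_surjective (MonoidHom.ofInjective hinj).symm.toMonoidHom
      (MonoidHom.ofInjective hinj).symm.surjective
end

section
/- Let H be a finite group and let G = H ≀ ℤ be the restricted wreath product of H with ℤ. Then for all x, y ∈ G, the commutator ⁅x, y⁆ raised to the power |H| (the cardinality of H) equals the identity. In particular G satisfies a non-trivial law. -/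
/-- The restricted direct product `Π₀ i : ℤ, H`: the subgroup of `ℤ → H`
consisting of the finitely supported functions (pointwise multiplication). -/
def RestrictedProductZ (H : Type*) [Group H] : Subgroup (ℤ → H) where
  carrier := {f | (Function.mulSupport f).Finite}
  one_mem' := by simp [Function.mulSupport_one]
  mul_mem' := by
    intro f g hf hg
    exact ((hf.union hg).subset (Function.mulSupport_mul f g))
  inv_mem' := by
    intro f hf
    simpa [Function.mulSupport_inv] using hf

/-- The shift automorphism of the restricted product: `(n • f) i = f (i - n)`. -/
def shiftAut (H : Type*) [Group H] (n : ℤ) : MulAut (RestrictedProductZ H) where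
  toFun f := ⟨fun i => (f : ℤ → H) (i - n), by
    refine (f.2.image (· + n)).subset ?_
    intro i hi
    exact ⟨i - n, hi, by ring⟩⟩
  invFun f := ⟨fun i => (f : ℤ → H) (i + n), by
    refine (f.2.image (· - n)).subset ?_
    intro i hi
    exact ⟨i + n, hi, by ring⟩⟩
  left_inv f := by ext i; simp
  right_inv f := by ext i; simp
  map_mul' f g := by ext i; rfl

/-- The action of `ℤ` (as `Multiplicative ℤ`) on the restricted product by shift
automorphisms. -/
def shiftHom (H : Type*) [Group H] :
    Multiplicative ℤ →* MulAut (RestrictedProductZ H) where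
  toFun n := shiftAut H n.toAdd
  map_one' := by
    ext f i
    show (f : ℤ → H) (i - 0) = (f : ℤ → H) i
    rw [sub_zero]
  map_mul' m n := by
    ext f i
    show (f : ℤ → H) (i - (m.toAdd + n.toAdd)) = (f : ℤ → H) (i - m.toAdd - n.toAdd)
    rw [sub_sub]

/-- The restricted wreath product `H ≀ ℤ`, as the semidirect product of the
restricted direct product `Π₀ i : ℤ, H` with `ℤ` acting by shifts. -/
abbrev WreathProductZ (H : Type*) [Group H] :=
  RestrictedProductZ H ⋊[shiftHom H] Multiplicative ℤ

open scoped commutatorElement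

namespace SemidirectProduct

variable {N G : Type*} [Group N] [CommGroup G] {φ : G →* MulAut N}

theorem commutatorElement_mem_range_inl (x y : N ⋊[φ] G) :
    ⁅x, y⁆ ∈ (inl : N →* N ⋊[φ] G).range := by
  rw [range_inl_eq_ker_rightHom, MonoidHom.mem_ker, map_commutatorElement,
    commutatorElement_eq_one_iff_commute]
  exact Commute.all _ _

theorem commutatorElement_pow_eq_one {n : ℕ} (hN : ∀ a : N, a ^ n = 1) (x y : N ⋊[φ] G) :
    ⁅x, y⁆ ^ n = 1 := by
  obtain ⟨a, ha⟩ := commutatorElement_mem_range_inl x y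
  rw [← ha, ← map_pow, hN, map_one]

end SemidirectProduct

/-- For a finite group `H`, the restricted wreath product `H ≀ ℤ` satisfies the law
`⁅x, y⁆ ^ |H| = 1`. -/
theorem wreath_product_commutator_law (H : Type*) [Group H] [Finite H]
    (x y : WreathProductZ H) : ⁅x, y⁆ ^ (Nat.card H) = 1 :=
  SemidirectProduct.commutatorElement_pow_eq_one
    (fun _ => Subtype.ext <| funext fun _ => pow_card_eq_one') x y
end

section
/- Let H be a group that is not solvable. Then the restricted direct product Π₀ i : ℤ, H is not virtually solvable: every subgroup of finite index in Π₀ i : ℤ, H fails to be solvable. -/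
theorem exists_map_commute_of_pairwise_commute {ι H Q : Type*} [Infinite ι] [Group H]
    [Group Q] [Finite Q] (ψ : ι → H →* Q)
    (hψ : Pairwise fun i j => ∀ a b, Commute (ψ i a) (ψ j b)) :
    ∃ i, ∀ a b, Commute (ψ i a) (ψ i b) := by
  obtain ⟨i, j, hij, hrange⟩ := Finite.exists_ne_map_eq_of_infinite fun i => Set.range (ψ i)
  refine ⟨i, fun a b => ?_⟩
  obtain ⟨a', ha'⟩ : ψ i a ∈ Set.range (ψ j) := hrange ▸ Set.mem_range_self a
  rw [← ha']
  exact hψ hij.symm a' b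

theorem isSolvable_of_isSolvable_ker_of_commute {H Q : Type*} [Group H] [Group Q] (f : H →* Q)
    [Group.IsSolvable f.ker] (hf : ∀ a b, Commute (f a) (f b)) : Group.IsSolvable H := by
  have : Group.IsSolvable f.range := Group.isSolvable_of_comm fun
    | ⟨_, a, rfl⟩, ⟨_, b, rfl⟩ => Subtype.ext (hf a b)
  exact Group.isSolvable_of_ker_le_range f.ker.subtype f.rangeRestrict
    (by rw [MonoidHom.ker_rangeRestrict, Subgroup.range_subtype])

theorem isSolvable_of_pairwise_commute_of_isSolvable_finiteIndex {ι H P : Type*} [Infinite ι]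
    [Group H] [Group P] (φ : ι → H →* P) (hφ : ∀ i, Function.Injective (φ i))
    (hcomm : Pairwise fun i j => ∀ a b, Commute (φ i a) (φ j b))
    (G : Subgroup P) [G.FiniteIndex] [Group.IsSolvable G] : Group.IsSolvable H := by
  set N := G.normalCore
  have : Group.IsSolvable N :=
    Group.isSolvable_of_isSolvable_injective (Subgroup.inclusion_injective G.normalCore_le)
  let ψ i := (QuotientGroup.mk' N).comp (φ i)
  obtain ⟨i, hi⟩ := exists_map_commute_of_pairwise_commute ψ
    fun i j hij a b => (hcomm hij a b).map (QuotientGroup.mk' N)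
  have hker : (ψ i).ker = N.comap (φ i) := by
    rw [← MonoidHom.comap_ker, QuotientGroup.ker_mk']
  have : Group.IsSolvable (ψ i).ker := hker ▸ Group.isSolvable_of_isSolvable_injective
    (f := (φ i).subgroupComap N) fun x y hxy => Subtype.ext (hφ i (congrArg Subtype.val hxy))
  exact isSolvable_of_isSolvable_ker_of_commute (ψ i) hi

namespace RestrictedProductZ

variable {H : Type*} [Group H]

def mulSingle (i : ℤ) : H →* RestrictedProductZ H :=
  (MonoidHom.mulSingle (fun _ : ℤ => H) i).codRestrict (RestrictedProductZ H)
    fun _ => (Set.finite_singleton i).subset Pi.mulSupport_mulSingle_subset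

theorem mulSingle_injective (i : ℤ) : Function.Injective (mulSingle (H := H) i) :=
  fun _ _ h => Pi.mulSingle_injective i (congrArg Subtype.val h)

theorem pairwise_commute_mulSingle :
    Pairwise fun i j => ∀ a b : H, Commute (mulSingle i a) (mulSingle j b) :=
  fun _ _ hij a b => Subtype.ext (Pi.mulSingle_commute (f := fun _ : ℤ => H) hij a b)

end RestrictedProductZ

/-- If `H` is not solvable, then the restricted direct product `Π₀ i : ℤ, H`
is not virtually solvable: no finite-index subgroup of it is solvable. -/
theorem restrictedProduct_not_virtually_solvable (H : Type*) [Group H]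
    (hH : ¬ IsSolvable H) (G : Subgroup (RestrictedProductZ H)) (hG : G.index ≠ 0) :
    ¬ IsSolvable G := by
  intro hGsolvable
  have : Group.IsSolvable G := hGsolvable
  have : G.FiniteIndex := ⟨hG⟩
  exact hH <| isSolvable_of_pairwise_commute_of_isSolvable_finiteIndex RestrictedProductZ.mulSingle
    RestrictedProductZ.mulSingle_injective RestrictedProductZ.pairwise_commute_mulSingle G
end

section
/- For every natural number n ≥ 5, the restricted wreath product G = (Equiv.Perm (Fin n)) ≀ ℤ of the symmetric group S_n with ℤ is not virtually solvable (every subgroup of finite index in G fails to be solvable), and G satisfies the law ⁅x, y⁆^{n!} = 1 for all x, y ∈ G. -/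
open scoped commutatorElement

namespace RestrictedProductZ

variable {H : Type*} [Group H]

def single (i : ℤ) : H →* RestrictedProductZ H :=
  (MonoidHom.mulSingle (fun _ : ℤ => H) i).codRestrict _ fun _ =>
    (Set.finite_singleton i).subset Pi.mulSupport_mulSingle_subset

@[simp]
theorem coe_single (i : ℤ) (h : H) : (single i h : ℤ → H) = Pi.mulSingle i h := rfl

@[simp]
theorem shiftAut_apply (t : ℤ) (f : RestrictedProductZ H) (j : ℤ) :
    (shiftAut H t f : ℤ → H) j = (f : ℤ → H) (j - t) := rfl

theorem single_injective (i : ℤ) : Function.Injective (single (H := H) i) := fun _ _ h =>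
  Pi.mulSingle_injective i (congrArg Subtype.val h)

theorem shiftAut_single (t i : ℤ) (h : H) : shiftAut H t (single i h) = single (i + t) h := by
  ext j
  simp only [shiftAut_apply, coe_single, Pi.mulSingle_apply, sub_eq_iff_eq_add]

theorem commutatorElement_inv_single_mul_single {j k : ℤ} (hjk : j ≠ k) (x h : H) :
    ⁅(single j x)⁻¹ * single k x, single k h⁆ = single k ⁅x, h⁆ := by
  ext i
  simp only [commutatorElement_def, Subgroup.coe_mul, Subgroup.coe_inv, Pi.mul_apply,
    Pi.inv_apply, coe_single, Pi.mulSingle_apply]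
  by_cases hk : i = k
  · simp [hk, hjk.symm]
  · by_cases hj : i = j <;> simp [hk, hj, hjk]

theorem pow_eq_one_of_forall_pow_eq_one {e : ℕ} (he : ∀ h : H, h ^ e = 1)
    (f : RestrictedProductZ H) :
    f ^ e = 1 :=
  Subtype.ext <| funext fun i => he ((f : ℤ → H) i)

end RestrictedProductZ

namespace WreathProductZ

open SemidirectProduct

variable {H : Type*} [Group H]

def single (i : ℤ) : H →* WreathProductZ H :=
  inl.comp (RestrictedProductZ.single i)

theorem single_injective (i : ℤ) : Function.Injective (single (H := H) i) :=
  inl_injective.comp (RestrictedProductZ.single_injective i)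

theorem single_apply (i : ℤ) (h : H) : single i h = inl (RestrictedProductZ.single i h) := rfl

theorem inr_mul_single_mul_inr_inv (t i : ℤ) (h : H) :
    inr (Multiplicative.ofAdd t) * single i h * (inr (Multiplicative.ofAdd t))⁻¹ =
      single (i + t) h := by
  rw [single_apply, single_apply, ← map_inv, ← inl_aut]
  exact congrArg inl (RestrictedProductZ.shiftAut_single t i h)

theorem single_commutatorElement_mem {N : Subgroup (WreathProductZ H)} [N.Normal]
    [N.FiniteIndex] (x h : H) : single 0 ⁅x, h⁆ ∈ N := by
  obtain ⟨j, k, hjk, hcoset⟩ :=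
    Finite.exists_ne_map_eq_of_infinite fun i : ℤ => (single i x : WreathProductZ H ⧸ N)
  have hmem : (single j x)⁻¹ * single k x ∈ N := QuotientGroup.eq.mp hcoset
  have hk : single k ⁅x, h⁆ ∈ N := by
    have := Subgroup.commutator_le_left N ⊤
      (Subgroup.commutator_mem_commutator hmem (Subgroup.mem_top (single k h)))
    simp only [single_apply] at this ⊢
    rwa [← map_inv, ← map_mul, ← map_commutatorElement,
      RestrictedProductZ.commutatorElement_inv_single_mul_single hjk] at this
  have := ‹N.Normal›.conj_mem _ hk (inr (Multiplicative.ofAdd (-k)))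
  rwa [inr_mul_single_mul_inr_inv, add_neg_cancel] at this

theorem commutator_le_comap_single {N : Subgroup (WreathProductZ H)} [N.Normal]
    [N.FiniteIndex] : commutator H ≤ N.comap (single 0) := by
  rw [commutator_def, Subgroup.commutator_le]
  exact fun x _ h _ => single_commutatorElement_mem x h

theorem isSolvable_of_finiteIndex (K : Subgroup (WreathProductZ H)) [K.FiniteIndex]
    [Group.IsSolvable K] : Group.IsSolvable H := by
  have : Group.IsSolvable K.normalCore :=
    Group.isSolvable_of_isSolvable_injective (Subgroup.inclusion_injective K.normalCore_le)
  have : Group.IsSolvable (K.normalCore.comap (single 0)) :=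
    Group.isSolvable_of_isSolvable_injective (f := (single 0).subgroupComap K.normalCore)
      fun _ _ hab => Subtype.ext (single_injective 0 (congrArg Subtype.val hab))
  refine Group.isSolvable_of_ker_le_range (K.normalCore.comap (single 0)).subtype
    Abelianization.of ?_
  rw [Abelianization.ker_of, Subgroup.range_subtype]
  exact commutator_le_comap_single

theorem commutatorElement_pow_eq_one {e : ℕ} (he : ∀ h : H, h ^ e = 1)
    (x y : WreathProductZ H) : ⁅x, y⁆ ^ e = 1 := by
  obtain ⟨f, hf⟩ : ⁅x, y⁆ ∈ (inl : RestrictedProductZ H →* WreathProductZ H).range := by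
    rw [range_inl_eq_ker_rightHom, MonoidHom.mem_ker, map_commutatorElement,
      commutatorElement_eq_one_iff_mul_comm]
    exact mul_comm _ _
  rw [← hf, ← map_pow, RestrictedProductZ.pow_eq_one_of_forall_pow_eq_one he, map_one]

end WreathProductZ

/-- For `n ≥ 5`, the restricted wreath product `S_n ≀ ℤ` of the symmetric group on
`n` letters with `ℤ` is not virtually solvable (no finite-index subgroup is solvable),
yet it satisfies the law `⁅x, y⁆ ^ n! = 1`. -/
theorem symmetric_wreath_product_example (n : ℕ) (hn : 5 ≤ n) :
    (∀ G : Subgroup (WreathProductZ (Equiv.Perm (Fin n))), G.index ≠ 0 → ¬ IsSolvable G) ∧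
      (∀ x y : WreathProductZ (Equiv.Perm (Fin n)), ⁅x, y⁆ ^ (n.factorial) = 1) := by
  refine ⟨fun G hG hsolv => ?_, fun x y => ?_⟩
  · have : G.FiniteIndex := ⟨hG⟩
    have : Group.IsSolvable G := hsolv
    refine Equiv.Perm.not_isSolvable (Fin n) ?_ (WreathProductZ.isSolvable_of_finiteIndex G)
    simpa using hn
  · refine WreathProductZ.commutatorElement_pow_eq_one (fun h => ?_) x y
    simpa only [Fintype.card_perm, Fintype.card_fin] using pow_card_eq_one (x := h)
end
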